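/- arXiv:0803.4329 — 5 statements merged into one kernel-verified Lean document; each statement's English description precedes it below -/
import Mathlib

section
/- With α = α_{(z,χ)} : ℤ ⋉ H → GL(n,ℂ) as above, for every (j,h) ∈ ℤ ⋉ H we have det(α(j,h)) = (−1)^{(n+1)j} · z^j · ∏_{i=0}^{n−1} χ(t^i·h). In particular, if multiplication by t−1 is surjective on H and χ kills (t^n−1)·H, then det(α(j,h)) = (−1)^{(n+1)j}·z^j. -/
open Matrix

/-!
The determinant is multiplicative on `α(j,h) = Tʲ·D(h)`. The first row of `T` has a single
nonzero entry, `z` in the last column, whose complementary minor is the identity, so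
`det T = (-1)^(n-1)·z`; and `(-1)^((n-1)j) = (-1)^((n+1)j)`. `D(h)` is diagonal.
If `h = (t-1)g`, then `χ(tⁱh) = χ(tⁱ⁺¹g)/χ(tⁱg)`, so the product telescopes to
`χ(tⁿg)/χ(g) = 1`.
-/

section CyclicShift

variable {R : Type*} [CommRing R]

def cyclicShift (n : ℕ) (c : R) : Matrix (Fin n) (Fin n) R :=
  of fun i j => if (i : ℕ) = (j : ℕ) + 1 then 1 else if (i : ℕ) = 0 ∧ (j : ℕ) = n - 1 then c else 0

theorem det_cyclicShift {n : ℕ} (hn : 0 < n) (c : R) :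
    (cyclicShift n c).det = (-1) ^ (n - 1) * c := by
  obtain ⟨m, rfl⟩ : ∃ m, n = m + 1 := ⟨n - 1, by omega⟩
  rw [Nat.add_sub_cancel, det_succ_row_zero, Finset.sum_eq_single (Fin.last m)]
  · have hminor : (cyclicShift (m + 1) c).submatrix Fin.succ (Fin.last m).succAbove = 1 := by
      ext i j
      simp only [submatrix_apply, cyclicShift, of_apply, Fin.val_succ, Fin.succAbove_last,
        Fin.val_castSucc, one_apply, Fin.ext_iff]
      split_ifs <;> simp_all
    rw [hminor]
    simp [cyclicShift]
  · intro j _ hj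
    have : (j : ℕ) ≠ m := fun h => hj (Fin.ext h)
    simp [cyclicShift, this]
  · simp

end CyclicShift

theorem det_coe_zpow_mul {n K : Type*} [DecidableEq n] [Fintype n] [Field K]
    (U D : GL n K) (j : ℤ) :
    ((U ^ j * D : GL n K) : Matrix n n K).det
      = (U : Matrix n n K).det ^ j * (D : Matrix n n K).det := by
  rw [← GeneralLinearGroup.val_det_apply, map_mul, map_zpow, Units.val_mul,
    Units.val_zpow_eq_zpow_val, GeneralLinearGroup.val_det_apply, GeneralLinearGroup.val_det_apply]

theorem prod_range_nsmul_apply_sub {H G : Type*} [AddCommGroup H] [CommGroup G]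
    (t : AddAut H) (χ : H → G) (hχ : ∀ a b, χ (a + b) = χ a * χ b) (n : ℕ) (g : H) :
    ∏ i ∈ Finset.range n, χ ((i • t) (t g - g)) = χ ((n • t) g) / χ g := by
  have hχsub (a b : H) : χ (a - b) = χ a / χ b :=
    eq_div_iff_mul_eq'.2 (by rw [← hχ, sub_add_cancel])
  have hterm (i : ℕ) : χ ((i • t) (t g - g)) = χ (((i + 1) • t) g) / χ ((i • t) g) := by
    rw [map_sub, succ_nsmul, AddAut.add_apply, hχsub]
  rw [Finset.prod_congr rfl fun i _ => hterm i, Finset.prod_range_div (fun i => χ ((i • t) g)),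
    zero_nsmul, AddAut.zero_apply]

theorem neg_one_pow_pred_mul_zpow {K : Type*} [Field K] {n : ℕ} (hn : 0 < n) (z : K) (j : ℤ) :
    ((-1) ^ (n - 1) * z) ^ j = (-1) ^ (((n : ℤ) + 1) * j) * z ^ j := by
  obtain ⟨m, rfl⟩ : ∃ m, n = m + 1 := ⟨n - 1, by omega⟩
  rw [mul_zpow, Nat.add_sub_cancel, ← zpow_natCast, ← _root_.zpow_mul]
  congr 1
  rw [show ((m + 1 : ℕ) + 1 : ℤ) * j = m * j + 2 * j by push_cast; ring,
    zpow_add₀ (by norm_num), _root_.zpow_mul (-1) 2 j]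
  norm_num

/-- det(α_{(z,χ)}(j,h)) = (−1)^{(n+1)j}·zʲ·∏_{i=0}^{n−1} χ(tⁱ·h); in particular,
if multiplication by t−1 is surjective on H and χ kills (tⁿ−1)·H, then
det(α(j,h)) = (−1)^{(n+1)j}·zʲ. -/
theorem stmt_9 (n : ℕ) (hn : 0 < n)
    (H : Type*) [AddCommGroup H] (t : AddAut H)
    (χ : H → ℂˣ) (hχ : ∀ a b : H, χ (a + b) = χ a * χ b)
    (z : ℂˣ)
    (U : GL (Fin n) ℂ)
    (hU : (U : Matrix (Fin n) (Fin n) ℂ) = Matrix.of fun i j : Fin n =>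
      if (i : ℕ) = (j : ℕ) + 1 then 1
      else if (i : ℕ) = 0 ∧ (j : ℕ) = n - 1 then (z : ℂ)
      else 0)
    (D : H → GL (Fin n) ℂ)
    (hD : ∀ h : H, (D h : Matrix (Fin n) (Fin n) ℂ)
      = Matrix.diagonal fun i : Fin n => (χ (((i : ℕ) • t) h) : ℂ)) :
    (∀ (j : ℤ) (h : H),
      ((U ^ j * D h : GL (Fin n) ℂ) : Matrix (Fin n) (Fin n) ℂ).det
        = (-1 : ℂ) ^ (((n : ℤ) + 1) * j) * (z : ℂ) ^ j
            * ∏ i ∈ Finset.range n, (χ ((i • t) h) : ℂ)) ∧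
    ((Function.Surjective fun h : H => t h - h) →
      (∀ h : H, χ ((n • t) h) = χ h) →
      ∀ (j : ℤ) (h : H),
        ((U ^ j * D h : GL (Fin n) ℂ) : Matrix (Fin n) (Fin n) ℂ).det
          = (-1 : ℂ) ^ (((n : ℤ) + 1) * j) * (z : ℂ) ^ j) := by
  have hdetU : (U : Matrix (Fin n) (Fin n) ℂ).det = (-1) ^ (n - 1) * z := by
    rw [hU]
    exact det_cyclicShift hn (z : ℂ)
  have hdet (j : ℤ) (h : H) : ((U ^ j * D h : GL (Fin n) ℂ) : Matrix (Fin n) (Fin n) ℂ).det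
      = (-1 : ℂ) ^ (((n : ℤ) + 1) * j) * (z : ℂ) ^ j
          * ∏ i ∈ Finset.range n, (χ ((i • t) h) : ℂ) := by
    rw [det_coe_zpow_mul, hdetU, neg_one_pow_pred_mul_zpow hn, hD, det_diagonal,
      Fin.prod_univ_eq_prod_range (fun i => (χ ((i • t) h) : ℂ))]
  refine ⟨hdet, fun hsurj hper j h => ?_⟩
  obtain ⟨g, rfl⟩ := hsurj h
  rw [hdet, ← Units.coe_prod, prod_range_nsmul_apply_sub t χ hχ, hper, div_self', Units.val_one,
    mul_one]
end

section
/- Let α : ℤ ⋉ H → GL(n,ℂ) be the representation α_{(z,χ)} where χ : H → ℂ* satisfies χ(t^n·h)=χ(h). If there exists 0 < ℓ < n with ℓ | n and χ(t^ℓ·h) = χ(h) for all h, then α is reducible, i.e., there is a nonzero proper subspace of ℂ^n invariant under all α(j,h). -/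
/-!
The power `U ^ ℓ` commutes with every `α(j, h)`: its entries are supported on `i ≡ j + ℓ (mod n)`,
hence on `i ≡ j (mod ℓ)` as `ℓ ∣ n`, while the diagonal of `D h` is `ℓ`-periodic. Its `(0, 0)` entry
vanishes because `0 < ℓ < n`, so `U ^ ℓ` is an invertible non-scalar matrix, and any of its
eigenspaces is a nonzero proper subspace invariant under its commutant.
-/

open Matrix

theorem Module.End.exists_invariant_of_ne_algebraMap {K V : Type*} [Field K] [IsAlgClosed K]
    [AddCommGroup V] [Module K V] [FiniteDimensional K V] (f : Module.End K V)
    (hf : ∀ μ : K, f ≠ algebraMap K _ μ) :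
    ∃ W : Submodule K V, W ≠ ⊥ ∧ W ≠ ⊤ ∧ ∀ g, Commute f g → ∀ v ∈ W, g v ∈ W := by
  have : Nontrivial V := by
    by_contra hV
    rw [not_nontrivial_iff_subsingleton] at hV
    exact hf 0 (Subsingleton.elim _ _)
  obtain ⟨μ, hμ⟩ := f.exists_eigenvalue
  refine ⟨f.eigenspace μ, hμ, fun htop => hf μ ?_, fun g hfg v hv => ?_⟩
  · ext v
    simpa using Module.End.mem_eigenspace_iff.1 (htop ▸ Submodule.mem_top : v ∈ f.eigenspace μ)
  · exact Module.End.mapsTo_genEigenspace_of_comm hfg μ 1 hv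

theorem Matrix.exists_invariant_of_ne_scalar {ι K : Type*} [Fintype ι] [DecidableEq ι] [Field K]
    [IsAlgClosed K] {A : Matrix ι ι K} (hA : ∀ μ : K, A ≠ scalar ι μ) :
    ∃ W : Submodule K (ι → K), W ≠ ⊥ ∧ W ≠ ⊤ ∧
      ∀ B : Matrix ι ι K, Commute A B → ∀ v ∈ W, B *ᵥ v ∈ W := by
  obtain ⟨W, hbot, htop, hinv⟩ :=
    Module.End.exists_invariant_of_ne_algebraMap (toLinAlgEquiv' A) fun μ h =>
      hA μ (toLinAlgEquiv'.injective (by rw [h, ← AlgEquiv.commutes toLinAlgEquiv' μ]; rfl))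
  exact ⟨W, hbot, htop, fun B hAB v hv => by
    simpa using hinv _ (hAB.map toLinAlgEquiv') v hv⟩

theorem Matrix.ne_scalar_of_isUnit_of_apply_eq_zero {ι R : Type*} [Fintype ι] [DecidableEq ι]
    [CommRing R] [Nontrivial R] {A : Matrix ι ι R} (hA : IsUnit A) {i : ι} (hi : A i i = 0)
    (μ : R) : A ≠ scalar ι μ := by
  rintro rfl
  have : Nonempty ι := ⟨i⟩
  simp only [scalar_apply, diagonal_apply_eq] at hi
  simp [hi] at hA

theorem Matrix.eq_add_nsmul_of_pow_apply_ne_zero {ι R G : Type*} [Fintype ι] [DecidableEq ι]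
    [Semiring R] [AddMonoid G] {M : Matrix ι ι R} {f : ι → G} {a : G}
    (hM : ∀ i j, M i j ≠ 0 → f i = f j + a) (k : ℕ) {i j : ι} (hij : (M ^ k) i j ≠ 0) :
    f i = f j + k • a := by
  induction k generalizing i with
  | zero =>
    obtain rfl : i = j := by
      by_contra h
      exact hij (by simp [one_apply_ne h])
    simp
  | succ k ih =>
    rw [pow_succ', mul_apply] at hij
    obtain ⟨m, -, hm⟩ := Finset.exists_ne_zero_of_sum_ne_zero hij
    rw [hM i m (left_ne_zero_of_mul hm), ih (right_ne_zero_of_mul hm), add_assoc, succ_nsmul]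

theorem Matrix.commute_diagonal_of_apply_ne_zero {ι R : Type*} [Fintype ι] [DecidableEq ι]
    [CommSemiring R] {M : Matrix ι ι R} {d : ι → R} (h : ∀ i j, M i j ≠ 0 → d i = d j) :
    Commute M (diagonal d) := by
  ext i j
  rw [mul_diagonal, diagonal_mul]
  by_cases hij : M i j = 0
  · simp [hij]
  · rw [h i j hij, mul_comm]

/-- Addition in `AddAut H` is composition, so `m • t` is the `m`-th iterate of `t`. -/
theorem AddAut.apply_nsmul_eq_of_modEq {H α : Type*} [Add H] {t : AddAut H} {ℓ : ℕ}
    {φ : H → α} (hφ : ∀ h, φ ((ℓ • t) h) = φ h) (h : H) {i j : ℕ} (hij : i ≡ j [MOD ℓ]) :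
    φ ((i • t) h) = φ ((j • t) h) := by
  have hper : Function.Periodic (fun m : ℕ => φ ((m • t) h)) ℓ := fun m => by
    simp only [add_comm m, add_nsmul]
    exact hφ _
  rw [← hper.map_mod_nat i, ← hper.map_mod_nat j, hij]

def twistedShift {R : Type*} [Zero R] [One R] (n : ℕ) (z : R) : Matrix (Fin n) (Fin n) R :=
  of fun i j => if (i : ℕ) = (j : ℕ) + 1 then 1 else if (i : ℕ) = 0 ∧ (j : ℕ) = n - 1 then z else 0

theorem twistedShift_apply_ne_zero {R : Type*} [Zero R] [One R] {n : ℕ} {z : R} {i j : Fin n}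
    (hij : twistedShift n z i j ≠ 0) : (i : ZMod n) = j + 1 := by
  rw [twistedShift, of_apply] at hij
  split_ifs at hij with h1 h2
  · simp [h1]
  · rw [h2.1, h2.2, Nat.cast_zero, ← Nat.cast_succ, Nat.succ_eq_add_one, Nat.sub_add_cancel j.pos,
      ZMod.natCast_self]
  · exact absurd rfl hij

theorem stmt_10_general (n : ℕ)
    (H : Type*) [AddCommGroup H] (t : AddAut H)
    (χ : H → ℂˣ)
    (z : ℂˣ)
    (U : GL (Fin n) ℂ)
    (hU : (U : Matrix (Fin n) (Fin n) ℂ) = Matrix.of fun i j : Fin n =>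
      if (i : ℕ) = (j : ℕ) + 1 then 1
      else if (i : ℕ) = 0 ∧ (j : ℕ) = n - 1 then (z : ℂ)
      else 0)
    (D : H → GL (Fin n) ℂ)
    (hD : ∀ h : H, (D h : Matrix (Fin n) (Fin n) ℂ)
      = Matrix.diagonal fun i : Fin n => (χ (((i : ℕ) • t) h) : ℂ))
    (ℓ : ℕ) (hℓ0 : 0 < ℓ) (hℓn : ℓ < n) (hdvd : ℓ ∣ n)
    (hperℓ : ∀ h : H, χ ((ℓ • t) h) = χ h) :
    ∃ V : Submodule ℂ (Fin n → ℂ), V ≠ ⊥ ∧ V ≠ ⊤ ∧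
      ∀ (j : ℤ) (h : H), ∀ v ∈ V,
        ((U ^ j * D h : GL (Fin n) ℂ) : Matrix (Fin n) (Fin n) ℂ).mulVec v ∈ V := by
  have hU_shift : (U : Matrix (Fin n) (Fin n) ℂ) = twistedShift n (z : ℂ) := hU
  set A := twistedShift n (z : ℂ) ^ ℓ
  have hA_supp : ∀ i j, A i j ≠ 0 → ((i : ℕ) : ZMod n) = (j : ℕ) + ℓ := fun i j hij => by
    simpa using eq_add_nsmul_of_pow_apply_ne_zero (fun i j => twistedShift_apply_ne_zero) ℓ hij
  have hA_D : ∀ h, Commute A (D h) := fun h => by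
    rw [hD]
    refine commute_diagonal_of_apply_ne_zero fun i j hij => congrArg _ ?_
    refine AddAut.apply_nsmul_eq_of_modEq hperℓ h ?_
    have := ((ZMod.natCast_eq_natCast_iff _ _ _).1 (by exact_mod_cast hA_supp i j hij)).of_dvd hdvd
    exact this.trans Nat.add_modEq_right
  have hA_U : ∀ j : ℤ, Commute A (U ^ j : GL (Fin n) ℂ) := fun j => by
    simpa [A, hU_shift] using (((Commute.refl U).pow_left ℓ).zpow_right j).units_val
  have hA_zero : A ⟨0, hℓ0.trans hℓn⟩ ⟨0, hℓ0.trans hℓn⟩ = 0 := by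
    by_contra h
    have := hA_supp _ _ h
    rw [Nat.cast_zero, zero_add, eq_comm, ZMod.natCast_eq_zero_iff] at this
    exact absurd (Nat.le_of_dvd hℓ0 this) (not_le.2 hℓn)
  have hA_unit : IsUnit A := by simpa [A, hU_shift] using U.isUnit.pow ℓ
  obtain ⟨V, hbot, htop, hinv⟩ :=
    exists_invariant_of_ne_scalar (ne_scalar_of_isUnit_of_apply_eq_zero hA_unit hA_zero)
  refine ⟨V, hbot, htop, fun j h v hv => hinv _ ?_ v hv⟩
  rw [Units.val_mul]
  exact (hA_U j).mul_right (hA_D h)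

/-- If χ is invariant under tˡ for some proper divisor ℓ of n, then
α_{(z,χ)} is reducible: some nonzero proper subspace of ℂⁿ is invariant
under all α(j,h). -/
theorem stmt_10 (n : ℕ) (hn : 0 < n)
    (H : Type*) [AddCommGroup H] (t : AddAut H)
    (χ : H → ℂˣ) (hχ : ∀ a b : H, χ (a + b) = χ a * χ b)
    (hper : ∀ h : H, χ ((n • t) h) = χ h)
    (z : ℂˣ)
    (U : GL (Fin n) ℂ)
    (hU : (U : Matrix (Fin n) (Fin n) ℂ) = Matrix.of fun i j : Fin n =>
      if (i : ℕ) = (j : ℕ) + 1 then 1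
      else if (i : ℕ) = 0 ∧ (j : ℕ) = n - 1 then (z : ℂ)
      else 0)
    (D : H → GL (Fin n) ℂ)
    (hD : ∀ h : H, (D h : Matrix (Fin n) (Fin n) ℂ)
      = Matrix.diagonal fun i : Fin n => (χ (((i : ℕ) • t) h) : ℂ))
    (ℓ : ℕ) (hℓ0 : 0 < ℓ) (hℓn : ℓ < n) (hdvd : ℓ ∣ n)
    (hperℓ : ∀ h : H, χ ((ℓ • t) h) = χ h) :
    ∃ V : Submodule ℂ (Fin n → ℂ), V ≠ ⊥ ∧ V ≠ ⊤ ∧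
      ∀ (j : ℤ) (h : H), ∀ v ∈ V,
        ((U ^ j * D h : GL (Fin n) ℂ) : Matrix (Fin n) (Fin n) ℂ).mulVec v ∈ V :=
  stmt_10_general n H t χ z U hU D hD ℓ hℓ0 hℓn hdvd hperℓ
end

section
/- Let n be a positive integer with prime factorization involving distinct primes p₁,…,p_r, and let {A(m)}_{m | n} be finite abelian groups with a compatible system of surjections A(m) → A(m') for m' | m, such that for any m | n and distinct indices i,j with p_i p_j | m, a character of A(m) factoring through both A(m/p_i) and A(m/p_j) also factors through A(m/(p_i p_j)) (and similarly for any subset of primes). Then the number of characters χ : A(n) → S¹ not factoring through A(m) for any proper divisor m of n equals ∑_{k | n, k squarefree} μ(k)·|A(n/k)|, where μ is the Möbius function. -/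
/-!
Every proper divisor of `n` divides some `n / p` with `p` a prime factor of `n`, so a character of
`A(n)` is primitive iff it factors through none of the `A(n / p)`. By the gcd condition, the
characters factoring through `A(n / p)` for every `p` in a set `T` of prime factors are those
factoring through `A(n / ∏ T)`; by surjectivity they are the characters of `A(n / ∏ T)`, and there
are `|A(n / ∏ T)|` of them. Inclusion–exclusion over `T`, with `μ(∏ T) = (-1)^|T|`, gives the sum
over squarefree divisors.
-/

open ArithmeticFunction

theorem Nat.card_monoidHom_circle (G : Type*) [CommGroup G] [Finite G] :
    Nat.card (G →* Circle) = Nat.card G := by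
  cases nonempty_fintype G
  let e : (G →* Circle) ≃ AddChar (Additive G) ℂ :=
    ((MulEquiv.multiplicativeAdditive G).monoidHomCongrLeft.toEquiv.symm.trans
      AddChar.toMonoidHomEquiv.symm).trans AddChar.circleEquivComplex.toEquiv
  rw [Nat.card_congr e, Nat.card_eq_fintype_card, AddChar.card_eq, ← Nat.card_eq_fintype_card]
  exact Nat.card_congr Additive.toMul

theorem Nat.card_forall_notMem_eq_sum_powerset {α ι : Type*} [Finite α] (s : Finset ι)
    (S : ι → Set α) :
    (Nat.card {a // ∀ i ∈ s, a ∉ S i} : ℤ) =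
      ∑ t ∈ s.powerset, (-1 : ℤ) ^ t.card * Nat.card ↥(⋂ i ∈ t, S i) := by
  classical
  cases nonempty_fintype α
  convert Finset.inclusion_exclusion_card_inf_compl s (fun i ↦ (S i).toFinset) using 1
  · rw [Nat.card_eq_fintype_card, Fintype.card_subtype]
    congr 2
    ext a
    simp [Finset.mem_inf]
  · refine Finset.sum_congr rfl fun t _ ↦ ?_
    rw [Nat.card_coe_set_eq, Set.ncard_eq_toFinset_card']
    congr 3
    ext a
    simp [Finset.mem_inf]

theorem Nat.sum_powerset_primeFactors_eq_sum_moebius {R : Type*} [CommRing R] {n : ℕ} (hn : n ≠ 0)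
    (f : ℕ → R) :
    ∑ t ∈ n.primeFactors.powerset, (-1 : R) ^ t.card * f (∏ p ∈ t, p) =
      ∑ k ∈ n.divisors.filter Squarefree, (moebius k : R) * f k := by
  rw [Nat.sum_divisors_filter_squarefree hn, Nat.factors_eq, List.toFinset_coe,
    Nat.toFinset_factors]
  refine Finset.sum_congr rfl fun t ht ↦ ?_
  rw [Finset.mem_powerset] at ht
  have hμ : moebius (∏ p ∈ t, p) = (-1) ^ t.card := by
    rw [isMultiplicative_moebius.map_prod_of_subset_primeFactors n t ht, Finset.prod_congr rfl
      fun p hp ↦ moebius_apply_prime (Nat.prime_of_mem_primeFactors (ht hp)), Finset.prod_const]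
  rw [Finset.prod_val]
  change _ = (moebius (∏ p ∈ t, p) : R) * f (∏ p ∈ t, p)
  rw [hμ, Int.cast_pow, Int.cast_neg, Int.cast_one]

theorem Nat.gcd_div_div_of_coprime {n p k : ℕ} (hcop : p.Coprime k) (hpk : p * k ∣ n) :
    Nat.gcd (n / p) (n / k) = n / (p * k) := by
  obtain ⟨c, rfl⟩ := hpk
  rcases Nat.eq_zero_or_pos p with rfl | hp
  · simp
  rcases Nat.eq_zero_or_pos k with rfl | hk
  · simp
  rw [Nat.mul_div_cancel_left _ (Nat.mul_pos hp hk), mul_assoc, Nat.mul_div_cancel_left _ hp,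
    mul_left_comm, Nat.mul_div_cancel_left _ hk, Nat.gcd_mul_right, hcop.symm.gcd_eq_one, one_mul]

theorem Nat.exists_mem_primeFactors_dvd_div {n m : ℕ} (hn : n ≠ 0) (hm : m ∣ n) (hmn : m ≠ n) :
    ∃ p ∈ n.primeFactors, m ∣ n / p := by
  obtain ⟨c, rfl⟩ := hm
  have hc : c ≠ 1 := by rintro rfl; exact hmn (mul_one m).symm
  refine ⟨c.minFac, Nat.mem_primeFactors.mpr
    ⟨Nat.minFac_prime hc, dvd_mul_of_dvd_right c.minFac_dvd m, hn⟩, ?_⟩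
  rw [Nat.mul_div_assoc _ c.minFac_dvd]
  exact dvd_mul_right m _

section InverseSystem

variable {A : ℕ → Type*} [∀ m, CommGroup (A m)]

def charsFactoringThrough (π : ∀ m m', m' ∣ m → (A m →* A m')) (n m : ℕ) :
    Set (A n →* Circle) :=
  {χ | ∃ (hm : m ∣ n) (ψ : A m →* Circle), χ = ψ.comp (π n m hm)}

variable {π : ∀ m m', m' ∣ m → (A m →* A m')} {n m m' : ℕ}

theorem charsFactoringThrough_self (hid : ∀ m, π m m (dvd_refl m) = MonoidHom.id (A m)) :
    charsFactoringThrough π n n = Set.univ :=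
  Set.eq_univ_of_forall fun χ ↦ ⟨dvd_rfl, χ, by rw [hid, MonoidHom.comp_id]⟩

theorem charsFactoringThrough_mono
    (hcomp : ∀ m m' m'' (h1 : m' ∣ m) (h2 : m'' ∣ m'),
      (π m' m'' h2).comp (π m m' h1) = π m m'' (h2.trans h1))
    (hmm' : m ∣ m') (hm'n : m' ∣ n) :
    charsFactoringThrough π n m ⊆ charsFactoringThrough π n m' := by
  rintro _ ⟨-, ψ, rfl⟩
  exact ⟨hm'n, ψ.comp (π m' m hmm'), by rw [MonoidHom.comp_assoc, hcomp]⟩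

theorem natCard_charsFactoringThrough [Finite (A m)] (hm : m ∣ n)
    (hsurj : Function.Surjective (π n m hm)) :
    Nat.card (charsFactoringThrough π n m) = Nat.card (A m) := by
  have hrange :
      charsFactoringThrough π n m = Set.range fun ψ : A m →* Circle ↦ ψ.comp (π n m hm) := by
    ext χ
    exact ⟨fun ⟨_, ψ, h⟩ ↦ ⟨ψ, h.symm⟩, fun ⟨ψ, h⟩ ↦ ⟨hm, ψ, h.symm⟩⟩
  rw [hrange, Nat.card_range_of_injective fun _ _ h ↦ (MonoidHom.cancel_right hsurj).mp h,
    Nat.card_monoidHom_circle]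

theorem biInter_charsFactoringThrough_div_prime
    (hid : ∀ m, π m m (dvd_refl m) = MonoidHom.id (A m))
    (hcomp : ∀ m m' m'' (h1 : m' ∣ m) (h2 : m'' ∣ m'),
      (π m' m'' h2).comp (π m m' h1) = π m m'' (h2.trans h1))
    (hgcd : ∀ d₁ d₂, charsFactoringThrough π n d₁ ∩ charsFactoringThrough π n d₂ ⊆
      charsFactoringThrough π n (Nat.gcd d₁ d₂))
    {T : Finset ℕ} (hT : T ⊆ n.primeFactors) :
    ⋂ p ∈ T, charsFactoringThrough π n (n / p) = charsFactoringThrough π n (n / ∏ p ∈ T, p) := by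
  induction T using Finset.induction_on with
  | empty => simp [charsFactoringThrough_self hid]
  | insert p T hpT ih =>
    have hT' : ∀ q ∈ T, q ∈ n.primeFactors := fun q hq ↦ hT (Finset.mem_insert_of_mem hq)
    have hp : p ∈ n.primeFactors := hT (Finset.mem_insert_self p T)
    have hcop : p.Coprime (∏ q ∈ T, q) := Nat.Coprime.prod_right fun q hq ↦
      (Nat.coprime_primes (Nat.prime_of_mem_primeFactors hp)
        (Nat.prime_of_mem_primeFactors (hT' q hq))).mpr (ne_of_mem_of_not_mem hq hpT).symm
    have hdvd : p * ∏ q ∈ T, q ∣ n := Finset.prod_insert hpT (f := id) ▸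
      (Finset.prod_dvd_prod_of_subset _ _ _ hT).trans (Nat.prod_primeFactors_dvd n)
    have hgcd_eq := Nat.gcd_div_div_of_coprime hcop hdvd
    rw [Finset.set_biInter_insert, ih hT', Finset.prod_insert hpT, ← hgcd_eq]
    refine (hgcd _ _).antisymm (Set.subset_inter ?_ ?_)
    · exact charsFactoringThrough_mono hcomp (Nat.gcd_dvd_left _ _)
        (Nat.div_dvd_of_dvd (Nat.dvd_of_mem_primeFactors hp))
    · exact charsFactoringThrough_mono hcomp (Nat.gcd_dvd_right _ _)
        (Nat.div_dvd_of_dvd (dvd_of_mul_left_dvd hdvd))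

theorem forall_notMem_charsFactoringThrough_div_prime_iff
    (hcomp : ∀ m m' m'' (h1 : m' ∣ m) (h2 : m'' ∣ m'),
      (π m' m'' h2).comp (π m m' h1) = π m m'' (h2.trans h1))
    (hn : n ≠ 0) (χ : A n →* Circle) :
    (∀ p ∈ n.primeFactors, χ ∉ charsFactoringThrough π n (n / p)) ↔
      ¬ ∃ (m : ℕ) (hm : m ∣ n), m ≠ n ∧ ∃ ψ : A m →* Circle, χ = ψ.comp (π n m hm) := by
  constructor
  · rintro h ⟨m, hm, hmn, hχ⟩
    obtain ⟨p, hp, hmp⟩ := Nat.exists_mem_primeFactors_dvd_div hn hm hmn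
    exact h p hp (charsFactoringThrough_mono hcomp hmp
      (Nat.div_dvd_of_dvd (Nat.dvd_of_mem_primeFactors hp)) ⟨hm, hχ⟩)
  · rintro h p hp ⟨hpn, hχ⟩
    exact h ⟨n / p, hpn, (Nat.div_lt_self (Nat.pos_of_ne_zero hn)
      (Nat.prime_of_mem_primeFactors hp).one_lt).ne, hχ⟩

end InverseSystem

/-- Möbius count: for a compatible inverse system of finite abelian groups A(m),
m ∣ n, with surjective transition maps, such that a character factoring through two
quotients factors through the one indexed by the gcd, the number of characters of
A(n) into the circle not factoring through A(m) for any proper divisor m of n equals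
∑_{k ∣ n, k squarefree} μ(k)·|A(n/k)|. -/
theorem stmt_16 (n : ℕ) (hn : 0 < n)
    (A : ℕ → Type*) [∀ m, CommGroup (A m)] [∀ m, Finite (A m)]
    (π : ∀ m m', m' ∣ m → (A m →* A m'))
    (hsurj : ∀ m m' (h' : m' ∣ m), m ∣ n → Function.Surjective (π m m' h'))
    (hid : ∀ m, π m m (dvd_refl m) = MonoidHom.id (A m))
    (hcomp : ∀ m m' m'' (h1 : m' ∣ m) (h2 : m'' ∣ m'),
      (π m' m'' h2).comp (π m m' h1) = π m m'' (h2.trans h1))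
    (hgcd : ∀ (m d₁ d₂ : ℕ) (hm : m ∣ n) (h₁ : d₁ ∣ m) (h₂ : d₂ ∣ m)
      (χ : A m →* Circle),
      (∃ ψ : A d₁ →* Circle, χ = ψ.comp (π m d₁ h₁)) →
      (∃ ψ : A d₂ →* Circle, χ = ψ.comp (π m d₂ h₂)) →
      ∃ ψ : A (Nat.gcd d₁ d₂) →* Circle,
        χ = ψ.comp (π m (Nat.gcd d₁ d₂) ((Nat.gcd_dvd_left d₁ d₂).trans h₁))) :
    (Nat.card {χ : A n →* Circle //
        ¬ ∃ (m : ℕ) (hm : m ∣ n), m ≠ n ∧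
          ∃ ψ : A m →* Circle, χ = ψ.comp (π n m hm)} : ℤ)
      = ∑ k ∈ n.divisors.filter Squarefree,
          (moebius k : ℤ) * (Nat.card (A (n / k)) : ℤ) := by
  have : Finite (A n →* Circle) :=
    Nat.finite_of_card_ne_zero (Nat.card_monoidHom_circle (A n) ▸ Nat.card_pos.ne')
  have hgcd' (d₁ d₂ : ℕ) : charsFactoringThrough π n d₁ ∩ charsFactoringThrough π n d₂ ⊆
      charsFactoringThrough π n (Nat.gcd d₁ d₂) := by
    rintro χ ⟨⟨h₁, hχ₁⟩, ⟨h₂, hχ₂⟩⟩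
    exact ⟨_, hgcd n d₁ d₂ dvd_rfl h₁ h₂ χ hχ₁ hχ₂⟩
  calc (Nat.card {χ : A n →* Circle //
        ¬ ∃ (m : ℕ) (hm : m ∣ n), m ≠ n ∧ ∃ ψ : A m →* Circle, χ = ψ.comp (π n m hm)} : ℤ)
      = Nat.card {χ // ∀ p ∈ n.primeFactors, χ ∉ charsFactoringThrough π n (n / p)} := by
        rw [Nat.card_congr (Equiv.subtypeEquivRight
          (forall_notMem_charsFactoringThrough_div_prime_iff hcomp hn.ne')).symm]
    _ = ∑ t ∈ n.primeFactors.powerset, (-1 : ℤ) ^ t.card *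
          Nat.card ↥(⋂ p ∈ t, charsFactoringThrough π n (n / p)) :=
        Nat.card_forall_notMem_eq_sum_powerset _ _
    _ = ∑ t ∈ n.primeFactors.powerset, (-1 : ℤ) ^ t.card * Nat.card (A (n / ∏ p ∈ t, p)) := by
        refine Finset.sum_congr rfl fun t ht ↦ ?_
        have ht := Finset.mem_powerset.mp ht
        have hdvd : n / ∏ p ∈ t, p ∣ n := Nat.div_dvd_of_dvd
          ((Finset.prod_dvd_prod_of_subset _ _ _ ht).trans (Nat.prod_primeFactors_dvd n))
        rw [biInter_charsFactoringThrough_div_prime hid hcomp hgcd' ht,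
          natCard_charsFactoringThrough hdvd (hsurj _ _ _ dvd_rfl)]
    _ = _ := by
        simpa using Nat.sum_powerset_primeFactors_eq_sum_moebius hn.ne'
          fun k ↦ (Nat.card (A (n / k)) : ℤ)
end

section
/- Fix z ∈ ℂ and r ≥ 1, and let x ∈ S¹ ⊂ ℂ* be an element of infinite multiplicative order with z ≠ 0. Define α : ℤ ⋉ (ℂ[t,t⁻¹]/(t−z)^r) → GL(r+1, ℂ) by sending (0, p) with p represented by ∑_{i=0}^{r−1} a_i (t−z)^i to the matrix which is the identity except the first row is (1, a₀, a₁, …, a_{r−1}), and sending (1, 0) to x times the matrix which is block diagonal with a 1 in the (1,1) entry and an r×r Jordan block with eigenvalue z. Then α is a group homomorphism, where the semidirect product has multiplication (n', h')·(n, h) = (n'+n, z^n·h' + h). -/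
open Matrix LaurentPolynomial

/-- The ideal ((t−z)^r) in ℂ[t,t⁻¹]. -/
noncomputable def LqIdeal (z : ℂ) (r : ℕ) : Ideal (LaurentPolynomial ℂ) :=
  Ideal.span {((T 1 : LaurentPolynomial ℂ) - LaurentPolynomial.C z) ^ r}

/-- The identity matrix except that the first row is (1, a₀, a₁, …, a_{r−1}). -/
def rowMat (r : ℕ) (a : Fin r → ℂ) : Matrix (Fin (r + 1)) (Fin (r + 1)) ℂ :=
  Matrix.of fun i j : Fin (r + 1) =>
    if i = j then 1
    else if hij : (i : ℕ) = 0 ∧ 0 < (j : ℕ) then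
      a ⟨(j : ℕ) - 1, by have := j.isLt; omega⟩
    else 0

/-- The block-diagonal matrix diag(1, J_r(z)) with J_r(z) the r×r Jordan block
with eigenvalue z. -/
def jordMat (r : ℕ) (z : ℂ) : Matrix (Fin (r + 1)) (Fin (r + 1)) ℂ :=
  Matrix.of fun i j : Fin (r + 1) =>
    if i = j then (if (i : ℕ) = 0 then 1 else z)
    else if (j : ℕ) = (i : ℕ) + 1 ∧ 1 ≤ (i : ℕ) then 1 else 0

/-!
Write `u` for the class of `t - z`, so that `u ^ r = 0` and `t = z + u`. As `z ≠ 0` and `u` is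
nilpotent, `t` is invertible already in `ℂ[u]`, so the quotient is generated by `u` and every
class is `∑ aᵢ uⁱ` with `i < r`. In these coordinates addition adds the first rows of the
matrices `rowMat r a`, and multiplication by `t` acts on coefficient rows by the Jordan block
`J = jordanBlock r z`, which is the relation
`rowMat r a * jordMat r z = jordMat r z * rowMat r (a ᵥ* J)`.
Conjugating by powers of `α (1, 0)` turns this into the semidirect product law.
-/

def jordanBlock {R : Type*} [Zero R] [One R] (r : ℕ) (z : R) : Matrix (Fin r) (Fin r) R :=
  Matrix.of fun i j => if i = j then z else if (j : ℕ) = i + 1 then 1 else 0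

section Matrices

variable {r : ℕ}

@[simp] lemma rowMat_zero_zero (a : Fin r → ℂ) : rowMat r a 0 0 = 1 := by simp [rowMat]

@[simp] lemma rowMat_zero_succ (a : Fin r → ℂ) (j : Fin r) : rowMat r a 0 j.succ = a j := by
  simp [rowMat, eq_comm (a := (0 : Fin (r + 1)))]

@[simp] lemma rowMat_succ_zero (a : Fin r → ℂ) (i : Fin r) : rowMat r a i.succ 0 = 0 := by
  simp [rowMat, Fin.succ_ne_zero]

@[simp] lemma rowMat_succ_succ (a : Fin r → ℂ) (i j : Fin r) :
    rowMat r a i.succ j.succ = (1 : Matrix (Fin r) (Fin r) ℂ) i j := by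
  simp [rowMat, Matrix.one_apply]

@[simp] lemma jordMat_zero_zero (z : ℂ) : jordMat r z 0 0 = 1 := by simp [jordMat]

@[simp] lemma jordMat_zero_succ (z : ℂ) (j : Fin r) : jordMat r z 0 j.succ = 0 := by
  simp [jordMat, eq_comm (a := (0 : Fin (r + 1)))]

@[simp] lemma jordMat_succ_zero (z : ℂ) (i : Fin r) : jordMat r z i.succ 0 = 0 := by
  simp [jordMat, Fin.succ_ne_zero]

@[simp] lemma jordMat_succ_succ (z : ℂ) (i j : Fin r) :
    jordMat r z i.succ j.succ = jordanBlock r z i j := by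
  simp [jordMat, jordanBlock]

lemma rowMat_mul_rowMat (a b : Fin r → ℂ) : rowMat r a * rowMat r b = rowMat r (a + b) := by
  ext i j
  cases i using Fin.cases <;> cases j using Fin.cases <;>
    simp [Matrix.mul_apply, Fin.sum_univ_succ, Matrix.one_apply, add_comm]

lemma rowMat_mul_jordMat (z : ℂ) (a : Fin r → ℂ) :
    rowMat r a * jordMat r z = jordMat r z * rowMat r (a ᵥ* jordanBlock r z) := by
  ext i j
  cases i using Fin.cases <;> cases j using Fin.cases <;>
    simp [Matrix.mul_apply, Fin.sum_univ_succ, Matrix.one_apply, Matrix.vecMul, dotProduct]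

end Matrices

section Nilpotent

variable {R A : Type*} [CommSemiring R] [Semiring A] [Algebra R A] {u : A} {r : ℕ}

lemma sum_jordanBlock_smul_pow (hu : u ^ r = 0) (z : R) (i : Fin r) :
    ∑ j, jordanBlock r z i j • u ^ (j : ℕ) = (algebraMap R A z + u) * u ^ (i : ℕ) := by
  rw [add_mul, ← Algebra.smul_def, ← pow_succ']
  by_cases hi : (i : ℕ) + 1 < r
  · rw [Finset.sum_eq_add_of_mem i ⟨(i : ℕ) + 1, hi⟩ (Finset.mem_univ _) (Finset.mem_univ _)
      (by simp [Fin.ext_iff])]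
    · simp [jordanBlock, Fin.ext_iff]
    · rintro j - ⟨hji, hj⟩
      rw [ne_eq, Fin.ext_iff] at hji hj
      simp [jordanBlock, Fin.ext_iff, Ne.symm hji, hj]
  · rw [show (i : ℕ) + 1 = r by omega, hu, add_zero, Finset.sum_eq_single i]
    · simp [jordanBlock]
    · intro j _ hji
      have hj : (j : ℕ) ≠ i + 1 := by omega
      simp [jordanBlock, Ne.symm hji, hj]
    · simp

lemma sum_vecMul_jordanBlock_smul_pow (hu : u ^ r = 0) (z : R) (a : Fin r → R) :
    ∑ j, (a ᵥ* jordanBlock r z) j • u ^ (j : ℕ)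
      = (algebraMap R A z + u) * ∑ i, a i • u ^ (i : ℕ) := by
  simp_rw [Finset.mul_sum, mul_smul_comm, ← sum_jordanBlock_smul_pow hu, Finset.smul_sum,
    smul_smul, vecMul, dotProduct, Finset.sum_smul]
  exact Finset.sum_comm

lemma exists_sum_smul_pow_eq_of_mem_adjoin (hu : u ^ r = 0) {y : A}
    (hy : y ∈ Algebra.adjoin R {u}) : ∃ a : Fin r → R, ∑ i, a i • u ^ (i : ℕ) = y := by
  rw [Algebra.adjoin_singleton_eq_range_aeval] at hy
  obtain ⟨p, rfl⟩ := hy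
  refine ⟨fun i => p.coeff i, ?_⟩
  rw [AlgHom.toRingHom_eq_coe, RingHom.coe_coe,
    Polynomial.aeval_eq_sum_range' (n := r + (p.natDegree + 1)) (by omega),
    Finset.sum_range_add, Fin.sum_univ_eq_sum_range (fun i => p.coeff i • u ^ i)]
  simp [pow_add, hu]

end Nilpotent

lemma exists_mem_adjoin_mul_eq_one {K A : Type*} [Field K] [Ring A] [Algebra K A] {u : A}
    (hu : IsNilpotent u) {z : K} (hz : z ≠ 0) :
    ∃ s ∈ Algebra.adjoin K {u}, (algebraMap K A z + u) * s = 1 := by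
  set S := Algebra.adjoin K {u}
  obtain ⟨n, hn⟩ := hu
  have hnil : IsNilpotent (⟨u, Algebra.self_mem_adjoin_singleton K u⟩ : S) :=
    ⟨n, Subtype.ext hn⟩
  obtain ⟨s, hs⟩ := (hnil.isUnit_add_left_of_commute ((isUnit_iff_ne_zero.2 hz).map
    (algebraMap K S)) (Algebra.commutes _ _).symm).exists_right_inv
  exact ⟨s, s.2, congrArg Subtype.val hs⟩

lemma mul_zpow_eq_zpow_mul {M G : Type*} [Group G] {B : M → G} {g : G} {c : ℤ → M → M}
    (hc_zero : ∀ h, c 0 h = h) (hc_add : ∀ m n h, c (m + n) h = c m (c n h))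
    (hB : ∀ h, B h * g = g * B (c 1 h)) (n : ℤ) (h : M) :
    B h * g ^ n = g ^ n * B (c n h) := by
  induction n using Int.induction_on generalizing h with
  | zero => simp [hc_zero]
  | succ n ih =>
    rw [_root_.zpow_add_one, ← mul_assoc, ih, mul_assoc, hB, ← mul_assoc, add_comm, hc_add]
  | pred n ih =>
    have hB_inv : B (c (-n) h) * g⁻¹ = g⁻¹ * B (c (-n - 1) h) := by
      rw [mul_inv_eq_iff_eq_mul, mul_assoc, hB, ← mul_assoc, inv_mul_cancel, one_mul, ← hc_add,
        add_sub_cancel]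
    rw [_root_.zpow_sub_one, ← mul_assoc, ih, mul_assoc, hB_inv, ← mul_assoc]

section Quotient

variable {z : ℂ} {r : ℕ}

lemma mk_T_one_sub_C_pow_eq_zero :
    Ideal.Quotient.mk (LqIdeal z r) (T 1 - C z) ^ r = 0 := by
  rw [← map_pow, Ideal.Quotient.eq_zero_iff_mem]
  exact Ideal.subset_span rfl

lemma mk_T_one_eq :
    Ideal.Quotient.mk (LqIdeal z r) (T 1)
      = algebraMap ℂ _ z + Ideal.Quotient.mk (LqIdeal z r) (T 1 - C z) := by
  rw [← Ideal.Quotient.mk_algebraMap, ← map_add, ← C_eq_algebraMap, add_sub_cancel]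

lemma mk_sum_C_mul_pow (a : Fin r → ℂ) :
    Ideal.Quotient.mk (LqIdeal z r) (∑ i : Fin r, C (a i) * (T 1 - C z) ^ (i : ℕ))
      = ∑ i, a i • Ideal.Quotient.mk (LqIdeal z r) (T 1 - C z) ^ (i : ℕ) := by
  rw [map_sum]
  refine Finset.sum_congr rfl fun i _ => ?_
  rw [map_mul, map_pow, C_eq_algebraMap, Ideal.Quotient.mk_algebraMap]
  exact (Algebra.smul_def _ _).symm

lemma adjoin_mk_T_one_sub_C_eq_top (hz : z ≠ 0) :
    Algebra.adjoin ℂ {Ideal.Quotient.mk (LqIdeal z r) (T 1 - C z)} = ⊤ := by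
  set S := Algebra.adjoin ℂ {Ideal.Quotient.mk (LqIdeal z r) (T 1 - C z)}
  obtain ⟨s, hs, hTs⟩ := exists_mem_adjoin_mul_eq_one ⟨r, mk_T_one_sub_C_pow_eq_zero⟩ hz
  have hT : Ideal.Quotient.mk (LqIdeal z r) (T 1) ∈ S := by
    rw [mk_T_one_eq]
    exact S.add_mem (S.algebraMap_mem z) (Algebra.self_mem_adjoin_singleton ℂ _)
  have hT_neg : Ideal.Quotient.mk (LqIdeal z r) (T (-1)) = s := by
    rw [← mk_T_one_eq] at hTs
    rw [← one_mul (Ideal.Quotient.mk _ (T (-1))), ← hTs, mul_right_comm, ← map_mul, ← T_add]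
    simp
  have hTn (n : ℤ) : Ideal.Quotient.mk (LqIdeal z r) (T n) ∈ S := by
    obtain ⟨k, rfl | rfl⟩ := Int.eq_nat_or_neg n
    · simpa [← map_pow, T_pow] using S.pow_mem hT k
    · simpa [← hT_neg, ← map_pow, T_pow] using S.pow_mem hs k
  rw [eq_top_iff]
  rintro y -
  obtain ⟨p, rfl⟩ := Ideal.Quotient.mk_surjective y
  induction p using LaurentPolynomial.induction_on' with
  | add p q hp hq => rw [map_add]; exact S.add_mem hp hq
  | C_mul_T n a =>
    rw [map_mul, C_eq_algebraMap, Ideal.Quotient.mk_algebraMap, ← Algebra.smul_def]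
    exact S.smul_mem (hTn n) a

lemma exists_mk_sum_C_mul_pow_eq (hz : z ≠ 0) (y : LaurentPolynomial ℂ ⧸ LqIdeal z r) :
    ∃ a : Fin r → ℂ,
      Ideal.Quotient.mk (LqIdeal z r) (∑ i : Fin r, C (a i) * (T 1 - C z) ^ (i : ℕ)) = y := by
  simp_rw [mk_sum_C_mul_pow]
  exact exists_sum_smul_pow_eq_of_mem_adjoin mk_T_one_sub_C_pow_eq_zero
    (adjoin_mk_T_one_sub_C_eq_top hz ▸ Algebra.mem_top)

variable {B : LaurentPolynomial ℂ ⧸ LqIdeal z r → GL (Fin (r + 1)) ℂ}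

lemma map_add_eq_mul_of_rowMat (hz : z ≠ 0)
    (hB : ∀ a : Fin r → ℂ,
      (B (Ideal.Quotient.mk (LqIdeal z r) (∑ i : Fin r, C (a i) * (T 1 - C z) ^ (i : ℕ)))
        : Matrix (Fin (r + 1)) (Fin (r + 1)) ℂ) = rowMat r a)
    (h h' : LaurentPolynomial ℂ ⧸ LqIdeal z r) : B (h + h') = B h * B h' := by
  obtain ⟨a, rfl⟩ := exists_mk_sum_C_mul_pow_eq hz h
  obtain ⟨b, rfl⟩ := exists_mk_sum_C_mul_pow_eq hz h'
  ext : 1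
  rw [Units.val_mul, hB, hB, rowMat_mul_rowMat, ← hB]
  simp only [mk_sum_C_mul_pow, Pi.add_apply, add_smul, Finset.sum_add_distrib]

lemma mul_eq_mul_mk_T_one_of_rowMat (hz : z ≠ 0)
    (hB : ∀ a : Fin r → ℂ,
      (B (Ideal.Quotient.mk (LqIdeal z r) (∑ i : Fin r, C (a i) * (T 1 - C z) ^ (i : ℕ)))
        : Matrix (Fin (r + 1)) (Fin (r + 1)) ℂ) = rowMat r a)
    {A : GL (Fin (r + 1)) ℂ} {x : ℂ}
    (hA : (A : Matrix (Fin (r + 1)) (Fin (r + 1)) ℂ) = x • jordMat r z)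
    (h : LaurentPolynomial ℂ ⧸ LqIdeal z r) :
    B h * A = A * B (Ideal.Quotient.mk (LqIdeal z r) (T 1) * h) := by
  obtain ⟨a, rfl⟩ := exists_mk_sum_C_mul_pow_eq hz h
  ext : 1
  rw [Units.val_mul, Units.val_mul, hB, hA, Matrix.mul_smul, rowMat_mul_jordMat, ← hB,
    Matrix.smul_mul]
  simp only [mk_sum_C_mul_pow, mk_T_one_eq,
    sum_vecMul_jordanBlock_smul_pow mk_T_one_sub_C_pow_eq_zero]

end Quotient

theorem stmt_17_general (r : ℕ) (z x : ℂ) (hz : z ≠ 0)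
    (α : ℤ × (LaurentPolynomial ℂ ⧸ LqIdeal z r) → GL (Fin (r + 1)) ℂ)
    (h0 : ∀ a : Fin r → ℂ,
      (α (0, Ideal.Quotient.mk (LqIdeal z r)
          (∑ i : Fin r, LaurentPolynomial.C (a i)
            * ((T 1 : LaurentPolynomial ℂ) - LaurentPolynomial.C z) ^ (i : ℕ)))
        : Matrix (Fin (r + 1)) (Fin (r + 1)) ℂ) = rowMat r a)
    (h1 : (α (1, 0) : Matrix (Fin (r + 1)) (Fin (r + 1)) ℂ) = x • jordMat r z)
    (hgen : ∀ (j : ℤ) (h : LaurentPolynomial ℂ ⧸ LqIdeal z r),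
      α (j, h) = (α (1, 0)) ^ j * α (0, h)) :
    ∀ (j₁ j₂ : ℤ) (h₁ h₂ : LaurentPolynomial ℂ ⧸ LqIdeal z r),
      α (j₁ + j₂, Ideal.Quotient.mk (LqIdeal z r) (T j₂) * h₁ + h₂)
        = α (j₁, h₁) * α (j₂, h₂) := by
  intro j₁ j₂ h₁ h₂
  set A := α (1, 0)
  have hconj (n : ℤ) (h : LaurentPolynomial ℂ ⧸ LqIdeal z r) :
      α (0, h) * A ^ n = A ^ n * α (0, Ideal.Quotient.mk (LqIdeal z r) (T n) * h) :=
    mul_zpow_eq_zpow_mul (B := fun h => α (0, h))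
      (c := fun n h => Ideal.Quotient.mk (LqIdeal z r) (T n) * h) (by simp)
      (fun m n h => by rw [T_add, map_mul, mul_assoc]) (mul_eq_mul_mk_T_one_of_rowMat hz h0 h1) n h
  calc α (j₁ + j₂, Ideal.Quotient.mk (LqIdeal z r) (T j₂) * h₁ + h₂)
      = A ^ j₁ * (A ^ j₂ * α (0, Ideal.Quotient.mk (LqIdeal z r) (T j₂) * h₁))
          * α (0, h₂) := by
        rw [hgen, map_add_eq_mul_of_rowMat (B := fun h => α (0, h)) hz h0, _root_.zpow_add]
        simp only [mul_assoc]
    _ = A ^ j₁ * α (0, h₁) * (A ^ j₂ * α (0, h₂)) := by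
        rw [← hconj]
        simp only [mul_assoc]
    _ = α (j₁, h₁) * α (j₂, h₂) := by rw [hgen j₁, hgen j₂]

/-- The map α : ℤ ⋉ (ℂ[t,t⁻¹]/(t−z)^r) → GL(r+1,ℂ) with α(0,∑aᵢ(t−z)ⁱ) the
identity-with-first-row matrix, α(1,0) = x·(1 ⊕ J_r(z)) and α(j,h)=α(1,0)ʲα(0,h),
is a group homomorphism for the semidirect multiplication
(n',h')·(n,h) = (n'+n, tⁿ·h' + h). -/
theorem stmt_17 (r : ℕ) (hr : 1 ≤ r) (z x : ℂ) (hz : z ≠ 0)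
    (hx : ‖x‖ = 1) (hxord : ∀ m : ℕ, m ≠ 0 → x ^ m ≠ 1)
    (α : ℤ × (LaurentPolynomial ℂ ⧸ LqIdeal z r) → GL (Fin (r + 1)) ℂ)
    (h0 : ∀ a : Fin r → ℂ,
      (α (0, Ideal.Quotient.mk (LqIdeal z r)
          (∑ i : Fin r, LaurentPolynomial.C (a i)
            * ((T 1 : LaurentPolynomial ℂ) - LaurentPolynomial.C z) ^ (i : ℕ)))
        : Matrix (Fin (r + 1)) (Fin (r + 1)) ℂ) = rowMat r a)
    (h1 : (α (1, 0) : Matrix (Fin (r + 1)) (Fin (r + 1)) ℂ) = x • jordMat r z)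
    (hgen : ∀ (j : ℤ) (h : LaurentPolynomial ℂ ⧸ LqIdeal z r),
      α (j, h) = (α (1, 0)) ^ j * α (0, h)) :
    ∀ (j₁ j₂ : ℤ) (h₁ h₂ : LaurentPolynomial ℂ ⧸ LqIdeal z r),
      α (j₁ + j₂, Ideal.Quotient.mk (LqIdeal z r) (T j₂) * h₁ + h₂)
        = α (j₁, h₁) * α (j₂, h₂) :=
  stmt_17_general r z x hz α h0 h1 hgen
end

section
/- The representation α : ℤ ⋉ (ℂ[t,t⁻¹]/(t−z)^r) → GL(r+1,ℂ) defined in the previous statement is injective (faithful), provided x ∈ S¹ has infinite order and z ≠ 0. -/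
/-!
The first row of `α(1,0) = x • diag(1, J_r(z))` is `x • e₀` and the first row of `rowMat r a` is
`(1, a)`, so the first row of `α(j, ∑ aᵢ (t-z)^i) = α(1,0)^j α(0, ∑ aᵢ (t-z)^i)` is `x^j • (1, a)`.
As `x` has infinite order, this row determines `j` and `a`. Every class of
`ℂ[t,t⁻¹]/((t-z)^r)` is such a sum `∑_{i<r} aᵢ (t-z)^i`: for `z ≠ 0`, `t = z + (t - z)` is a unit
plus a nilpotent, so `t⁻¹` is a polynomial in `t - z`; for `z = 0` the quotient is zero.
-/

open Matrix LaurentPolynomial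

lemma Polynomial.aeval_eq_sum_range_of_pow_eq_zero {R A : Type*} [CommSemiring R] [Semiring A]
    [Algebra R A] {u : A} {r : ℕ} (hu : u ^ r = 0) (p : Polynomial R) :
    Polynomial.aeval u p = ∑ i ∈ Finset.range r, p.coeff i • u ^ i := by
  rw [Polynomial.aeval_eq_sum_range' (n := r + (p.natDegree + 1)) (by omega),
    Finset.sum_range_add]
  simp [pow_add, hu]

lemma zpow_injective_of_pow_ne_one {G₀ : Type*} [GroupWithZero G₀] {x : G₀} (hx₀ : x ≠ 0)
    (hx : ∀ m : ℕ, m ≠ 0 → x ^ m ≠ 1) : Function.Injective fun j : ℤ => x ^ j := by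
  have hinf : ¬IsOfFinOrder (Units.mk0 x hx₀) := fun h =>
    let ⟨n, hn, h1⟩ := isOfFinOrder_iff_pow_eq_one.1 h
    hx n hn.ne' (by simpa [Units.ext_iff] using h1)
  intro m n hmn
  exact injective_zpow_iff_not_isOfFinOrder.2 hinf (Units.ext (by simpa using hmn))

section VecMul

variable {n K : Type*} [Fintype n] [DecidableEq n] [Field K]

lemma vecMul_vecMul_inv (M : GL n K) (v : n → K) : v ᵥ* (M : Matrix n n K) ᵥ* ↑M⁻¹ = v := by
  rw [Matrix.vecMul_vecMul, ← Units.val_mul, mul_inv_cancel, Units.val_one, Matrix.vecMul_one]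

variable {M : GL n K} {v : n → K} {c : K}

lemma ne_zero_of_vecMul_eq_smul (hv : v ≠ 0) (h : v ᵥ* (M : Matrix n n K) = c • v) : c ≠ 0 := by
  rintro rfl
  rw [zero_smul] at h
  exact hv (by rw [← vecMul_vecMul_inv M v, h, Matrix.zero_vecMul])

lemma vecMul_inv_of_vecMul_eq_smul (h : v ᵥ* (M : Matrix n n K) = c • v) :
    v ᵥ* (↑M⁻¹ : Matrix n n K) = c⁻¹ • v := by
  have hv : c • v ᵥ* (↑M⁻¹ : Matrix n n K) = v := by
    rw [← Matrix.smul_vecMul, ← h, vecMul_vecMul_inv]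
  rcases eq_or_ne c 0 with rfl | hc
  · rw [← hv, zero_smul, Matrix.zero_vecMul, smul_zero]
  · rw [eq_inv_smul_iff₀ hc, hv]

lemma vecMul_zpow_of_vecMul_eq_smul (h : v ᵥ* (M : Matrix n n K) = c • v) (j : ℤ) :
    v ᵥ* (↑(M ^ j) : Matrix n n K) = c ^ j • v := by
  have hpow (m : ℕ) : v ᵥ* (↑(M ^ m) : Matrix n n K) = c ^ m • v := by
    induction m with
    | zero => simp
    | succ m ih =>
      rw [pow_succ, Units.val_mul, ← Matrix.vecMul_vecMul, ih, Matrix.smul_vecMul, h, smul_smul,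
        pow_succ]
  cases j with
  | ofNat m => simpa using hpow m
  | negSucc m => rw [zpow_negSucc, zpow_negSucc, vecMul_inv_of_vecMul_eq_smul (hpow (m + 1))]

end VecMul

noncomputable def mkOfCoeffs (z : ℂ) (r : ℕ) (a : Fin r → ℂ) : LaurentPolynomial ℂ ⧸ LqIdeal z r :=
  Ideal.Quotient.mk (LqIdeal z r)
    (∑ i : Fin r, LaurentPolynomial.C (a i)
      * ((T 1 : LaurentPolynomial ℂ) - LaurentPolynomial.C z) ^ (i : ℕ))

lemma LqIdeal_zero (r : ℕ) : LqIdeal 0 r = ⊤ := by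
  rw [LqIdeal, Ideal.span_singleton_eq_top, map_zero, sub_zero]
  exact (isUnit_T 1).pow r

section LqQuotient

variable {z : ℂ} {r : ℕ}

local notation "mk" => Ideal.Quotient.mk (LqIdeal z r)

lemma mk_T_one_sub_C_pow : (mk (T 1 - C z)) ^ r = 0 := by
  rw [← map_pow, Ideal.Quotient.eq_zero_iff_mem]
  exact Ideal.subset_span rfl

lemma mk_T_one : mk (T 1) = mk (T 1 - C z) + algebraMap ℂ _ z := by
  rw [map_sub, C_eq_algebraMap, Ideal.Quotient.mk_algebraMap, sub_add_cancel]

lemma mkOfCoeffs_eq_sum (a : Fin r → ℂ) :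
    mkOfCoeffs z r a = ∑ i : Fin r, a i • mk (T 1 - C z) ^ (i : ℕ) := by
  simp only [mkOfCoeffs, map_sum, map_mul, map_pow]
  refine Finset.sum_congr rfl fun i _ => ?_
  rw [C_eq_algebraMap (a i), Ideal.Quotient.mk_algebraMap]
  exact (Algebra.smul_def _ _).symm

lemma range_aeval_mk_T_one_sub_C (hz : z ≠ 0) :
    (Polynomial.aeval (R := ℂ) (mk (T 1 - C z))).range = ⊤ := by
  set S := (Polynomial.aeval (R := ℂ) (mk (T 1 - C z))).range
  have hu : mk (T 1 - C z) ∈ S := ⟨Polynomial.X, Polynomial.aeval_X _⟩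
  have hT : mk (T 1) ∈ S := mk_T_one (r := r) ▸ add_mem hu (S.algebraMap_mem z)
  have hTunit : IsUnit (⟨mk (T 1), hT⟩ : S) := by
    have hsum : (⟨mk (T 1), hT⟩ : S) = ⟨_, hu⟩ + algebraMap ℂ S z :=
      Subtype.ext mk_T_one
    rw [hsum]
    refine IsNilpotent.isUnit_add_right_of_commute ⟨r, Subtype.ext ?_⟩
      (hz.isUnit.map _) (Commute.all _ _)
    exact mk_T_one_sub_C_pow
  have hTinv : mk (T (-1)) ∈ S := by
    have hinv : mk (T 1) * (hTunit.unit⁻¹ : Sˣ).val.val = mk (T 1) * mk (T (-1)) := by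
      rw [← map_mul, ← T_add, add_neg_cancel, T_zero, map_one]
      exact congrArg Subtype.val hTunit.mul_val_inv
    exact ((isUnit_T 1).map mk).mul_left_cancel hinv ▸ (hTunit.unit⁻¹ : Sˣ).val.prop
  refine top_unique fun q _ => ?_
  obtain ⟨f, rfl⟩ := Ideal.Quotient.mk_surjective q
  induction f using LaurentPolynomial.induction_on_mul_T with | mul_T p n
  rw [map_mul, show (T (-n) : LaurentPolynomial ℂ) = T (-1) ^ n by rw [T_pow]; simp, map_pow]
  refine mul_mem ?_ (pow_mem hTinv n)
  have hpoly : (Ideal.Quotient.mkₐ ℂ (LqIdeal z r)).comp Polynomial.toLaurentAlg =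
      (Polynomial.aeval (mk (T 1 - C z))).comp
        (Polynomial.aeval (Polynomial.X + Polynomial.C z)) :=
    Polynomial.algHom_ext (by simpa using mk_T_one)
  exact ⟨_, (congrArg (· p) hpoly).symm⟩

end LqQuotient

lemma mkOfCoeffs_surjective (z : ℂ) (r : ℕ) : Function.Surjective (mkOfCoeffs z r) := by
  rcases eq_or_ne z 0 with rfl | hz
  · have := Ideal.Quotient.subsingleton_iff.2 (LqIdeal_zero r)
    exact fun q => ⟨0, Subsingleton.elim _ _⟩
  · intro q
    obtain ⟨p, rfl⟩ :
        q ∈ (Polynomial.aeval (R := ℂ) (Ideal.Quotient.mk (LqIdeal z r) (T 1 - C z))).range :=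
      range_aeval_mk_T_one_sub_C hz ▸ Algebra.mem_top
    refine ⟨fun i => p.coeff i, ?_⟩
    rw [AlgHom.toRingHom_eq_coe, RingHom.coe_coe, mkOfCoeffs_eq_sum,
      Polynomial.aeval_eq_sum_range_of_pow_eq_zero mk_T_one_sub_C_pow,
      Fin.sum_univ_eq_sum_range (fun i => p.coeff i • _ ^ i)]

lemma single_zero_vecMul_jordMat (r : ℕ) (z : ℂ) :
    Pi.single 0 1 ᵥ* jordMat r z = Pi.single 0 1 := by
  ext j
  rw [single_one_vecMul]
  rcases eq_or_ne j 0 with rfl | hj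
  · simp [jordMat]
  · simp [jordMat, hj, Ne.symm hj]

lemma single_zero_vecMul_rowMat (r : ℕ) (a : Fin r → ℂ) :
    Pi.single 0 1 ᵥ* rowMat r a = Fin.cons 1 a := by
  ext j
  rw [single_one_vecMul]
  cases j using Fin.cases with
  | zero => simp [rowMat]
  | succ i => simp [rowMat, (Fin.succ_ne_zero i).symm]

theorem stmt_18_general (r : ℕ) (z x : ℂ)
    (hxord : ∀ m : ℕ, m ≠ 0 → x ^ m ≠ 1)
    (α : ℤ × (LaurentPolynomial ℂ ⧸ LqIdeal z r) → GL (Fin (r + 1)) ℂ)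
    (h0 : ∀ a : Fin r → ℂ,
      (α (0, Ideal.Quotient.mk (LqIdeal z r)
          (∑ i : Fin r, LaurentPolynomial.C (a i)
            * ((T 1 : LaurentPolynomial ℂ) - LaurentPolynomial.C z) ^ (i : ℕ)))
        : Matrix (Fin (r + 1)) (Fin (r + 1)) ℂ) = rowMat r a)
    (h1 : (α (1, 0) : Matrix (Fin (r + 1)) (Fin (r + 1)) ℂ) = x • jordMat r z)
    (hgen : ∀ (j : ℤ) (h : LaurentPolynomial ℂ ⧸ LqIdeal z r),
      α (j, h) = (α (1, 0)) ^ j * α (0, h)) :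
    Function.Injective α := by
  set e : Fin (r + 1) → ℂ := Pi.single 0 1
  have hA : e ᵥ* (α (1, 0) : Matrix (Fin (r + 1)) (Fin (r + 1)) ℂ) = x • e := by
    rw [h1, vecMul_smul, single_zero_vecMul_jordMat]
  have hx₀ : x ≠ 0 := ne_zero_of_vecMul_eq_smul (Pi.single_ne_zero_iff.2 one_ne_zero) hA
  have hrow (j : ℤ) (a : Fin r → ℂ) :
      e ᵥ* (α (j, mkOfCoeffs z r a) : Matrix (Fin (r + 1)) (Fin (r + 1)) ℂ) =
        x ^ j • Fin.cons 1 a := by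
    have h0a : (α (0, mkOfCoeffs z r a) : Matrix (Fin (r + 1)) (Fin (r + 1)) ℂ) = rowMat r a :=
      h0 a
    rw [hgen, Units.val_mul, ← vecMul_vecMul, vecMul_zpow_of_vecMul_eq_smul hA, smul_vecMul, h0a,
      single_zero_vecMul_rowMat]
  rintro ⟨j₁, h₁⟩ ⟨j₂, h₂⟩ heq
  obtain ⟨a₁, rfl⟩ := mkOfCoeffs_surjective z r h₁
  obtain ⟨a₂, rfl⟩ := mkOfCoeffs_surjective z r h₂
  have hrows :=
    congrArg (fun g : GL (Fin (r + 1)) ℂ => e ᵥ* (g : Matrix (Fin (r + 1)) (Fin (r + 1)) ℂ)) heq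
  simp only [hrow] at hrows
  obtain rfl : j₁ = j₂ := zpow_injective_of_pow_ne_one hx₀ hxord (by simpa using congrFun hrows 0)
  obtain rfl : a₁ = a₂ :=
    Fin.cons_right_injective _ (smul_right_injective _ (zpow_ne_zero _ hx₀) hrows)
  rfl

/-- The representation α : ℤ ⋉ (ℂ[t,t⁻¹]/(t−z)^r) → GL(r+1,ℂ) of the previous
statement is faithful, provided x ∈ S¹ has infinite order and z ≠ 0. -/
theorem stmt_18 (r : ℕ) (hr : 1 ≤ r) (z x : ℂ) (hz : z ≠ 0)
    (hx : ‖x‖ = 1) (hxord : ∀ m : ℕ, m ≠ 0 → x ^ m ≠ 1)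
    (α : ℤ × (LaurentPolynomial ℂ ⧸ LqIdeal z r) → GL (Fin (r + 1)) ℂ)
    (h0 : ∀ a : Fin r → ℂ,
      (α (0, Ideal.Quotient.mk (LqIdeal z r)
          (∑ i : Fin r, LaurentPolynomial.C (a i)
            * ((T 1 : LaurentPolynomial ℂ) - LaurentPolynomial.C z) ^ (i : ℕ)))
        : Matrix (Fin (r + 1)) (Fin (r + 1)) ℂ) = rowMat r a)
    (h1 : (α (1, 0) : Matrix (Fin (r + 1)) (Fin (r + 1)) ℂ) = x • jordMat r z)
    (hgen : ∀ (j : ℤ) (h : LaurentPolynomial ℂ ⧸ LqIdeal z r),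
      α (j, h) = (α (1, 0)) ^ j * α (0, h))
    (hhom : ∀ (j₁ j₂ : ℤ) (h₁ h₂ : LaurentPolynomial ℂ ⧸ LqIdeal z r),
      α (j₁ + j₂, Ideal.Quotient.mk (LqIdeal z r) (T j₂) * h₁ + h₂)
        = α (j₁, h₁) * α (j₂, h₂)) :
    Function.Injective α :=
  stmt_18_general r z x hxord α h0 h1 hgen
end
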